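/- The multi-class huberized loss ℓ_M(b, W) = (1/n) Σ_{i=1}^n Σ_{j=1}^J a_{ij} φ_H(b_j + x_iᵀ w_j) is convex and differentiable in (b, W) ∈ ℝ^J × ℝ^{p×J}, and its gradient is Lipschitz continuous with constant L_m = (J/(nδ)) Σ_{i=1}^n (1 + ‖x_i‖²) with respect to the Euclidean norm on (b, W) (Frobenius norm on W). -/

import Mathlib

/-!
`φ_H(t) = ((1 - t)₊² - (1 - δ - t)₊²) / (2δ)` is a difference of `C¹` functions, with derivative
`-clamp(1 - t, 0, δ) / δ`; this derivative is nondecreasing, so `φ_H` is convex, and it is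
`1/δ`-Lipschitz. Each summand of `ℓ_M` is a ridge function `U ↦ φ_H ⟪c, U⟫`, where
`⟪c, (b, W)⟫ = b_j + x_iᵀ w_j` and `‖c‖² = 1 + ‖x_i‖²`; its gradient `φ_H'(⟪c, U⟫) • c` is
`‖c‖²/δ`-Lipschitz. Summing the `nJ` ridge functions with weights `a_ij / n ∈ [0, 1/n]` gives
convexity and the constant `L_m`.
-/

/-- The huberized hinge loss. -/
noncomputable def phiH (δ t : ℝ) : ℝ :=
  if 1 < t then 0 else if 1 - δ < t then (1 - t) ^ 2 / (2 * δ) else 1 - t - δ / 2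

open Set

noncomputable def phiHDeriv (δ t : ℝ) : ℝ := -max 0 (min δ (1 - t)) / δ

theorem hasDerivAt_max_zero_sq (s : ℝ) :
    HasDerivAt (fun u : ℝ => max 0 u ^ 2) (2 * max 0 s) s := by
  rcases lt_trichotomy s 0 with hs | rfl | hs
  · have hloc : (fun u : ℝ => max 0 u ^ 2) =ᶠ[nhds s] fun _ => 0 := by
      filter_upwards [eventually_lt_nhds hs] with u hu
      simp [max_eq_left hu.le]
    simpa [max_eq_left hs.le] using (hasDerivAt_const s (0 : ℝ)).congr_of_eventuallyEq hloc
  · have hleft : HasDerivWithinAt (fun u : ℝ => max 0 u ^ 2) 0 (Iic 0) 0 :=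
      (hasDerivWithinAt_const 0 _ (0 : ℝ)).congr
        (fun u (hu : u ≤ 0) => by simp [max_eq_left hu]) (by simp)
    have hright : HasDerivWithinAt (fun u : ℝ => max 0 u ^ 2) 0 (Ici 0) 0 := by
      have := ((hasDerivAt_pow 2 (0 : ℝ)).hasDerivWithinAt (s := Ici 0)).congr
        (f₁ := fun u => max 0 u ^ 2) (fun u (hu : 0 ≤ u) => by simp [max_eq_right hu]) (by simp)
      simpa using this
    simpa [Iic_union_Ici] using hleft.union hright
  · have hloc : (fun u : ℝ => max 0 u ^ 2) =ᶠ[nhds s] fun u => u ^ 2 := by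
      filter_upwards [eventually_gt_nhds hs] with u hu
      rw [max_eq_right hu.le]
    simpa [max_eq_right hs.le, mul_comm] using (hasDerivAt_pow 2 s).congr_of_eventuallyEq hloc

theorem phiH_eq_sub_max_zero_sq {δ : ℝ} (hδ : 0 < δ) (t : ℝ) :
    phiH δ t = (max 0 (1 - t) ^ 2 - max 0 (1 - δ - t) ^ 2) / (2 * δ) := by
  unfold phiH
  split_ifs with h₁ h₂
  · rw [max_eq_left (by linarith), max_eq_left (by linarith)]; ring
  · rw [max_eq_right (by linarith), max_eq_left (by linarith)]; ring
  · rw [max_eq_right (by linarith), max_eq_right (by linarith)]; field_simp; ring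

theorem max_zero_sub_max_zero_sub {δ : ℝ} (hδ : 0 ≤ δ) (s : ℝ) :
    max 0 s - max 0 (s - δ) = max 0 (min δ s) := by
  rcases le_total s 0 with h | h
  · simp [max_eq_left h, max_eq_left (by linarith : s - δ ≤ 0), min_eq_right (h.trans hδ)]
  rcases le_total s δ with h' | h'
  · rw [max_eq_right h, max_eq_left (by linarith), min_eq_right h', max_eq_right h]; ring
  · rw [max_eq_right h, max_eq_right (by linarith), min_eq_left h', max_eq_right hδ]; ring

theorem hasDerivAt_phiH {δ : ℝ} (hδ : 0 < δ) (t : ℝ) :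
    HasDerivAt (phiH δ) (phiHDeriv δ t) t := by
  have h₁ := (hasDerivAt_max_zero_sq (1 - t)).comp t ((hasDerivAt_id t).const_sub 1)
  have h₂ := (hasDerivAt_max_zero_sq (1 - δ - t)).comp t ((hasDerivAt_id t).const_sub (1 - δ))
  rw [show phiH δ = _ from funext (phiH_eq_sub_max_zero_sq hδ)]
  refine ((h₁.sub h₂).div_const (2 * δ)).congr_deriv ?_
  rw [phiHDeriv, ← max_zero_sub_max_zero_sub hδ.le, show 1 - t - δ = 1 - δ - t by ring]
  field_simp
  ring

theorem monotone_phiHDeriv {δ : ℝ} (hδ : 0 < δ) : Monotone (phiHDeriv δ) := by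
  intro u v huv
  unfold phiHDeriv
  gcongr

theorem convexOn_phiH {δ : ℝ} (hδ : 0 < δ) : ConvexOn ℝ univ (phiH δ) :=
  Monotone.convexOn_univ_of_deriv (fun t => (hasDerivAt_phiH hδ t).differentiableAt)
    (by simpa only [funext fun t => (hasDerivAt_phiH hδ t).deriv] using monotone_phiHDeriv hδ)

theorem lipschitzWith_phiHDeriv {δ : ℝ} (hδ : 0 < δ) :
    LipschitzWith (Real.toNNReal δ)⁻¹ (phiHDeriv δ) := by
  refine LipschitzWith.of_dist_le_mul fun u v => ?_
  have hclamp : |max 0 (min δ (1 - v)) - max 0 (min δ (1 - u))| ≤ |u - v| :=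
    calc _ ≤ |min δ (1 - v) - min δ (1 - u)| := by
          simpa using abs_max_sub_max_le_max (0 : ℝ) (min δ (1 - v)) 0 (min δ (1 - u))
      _ ≤ |u - v| := by
          simpa [abs_sub_comm] using abs_min_sub_min_le_max δ (1 - v) δ (1 - u)
  rw [Real.dist_eq, Real.dist_eq, phiHDeriv, phiHDeriv, div_sub_div_same, neg_sub_neg, abs_div,
    abs_of_pos hδ, NNReal.coe_inv, Real.coe_toNNReal _ hδ.le, inv_mul_eq_div]
  gcongr

section RidgeSum

open RealInnerProductSpace

variable {F ι : Type*} [NormedAddCommGroup F] [InnerProductSpace ℝ F] [Fintype ι]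
  (w : ι → ℝ) (c : ι → F)

theorem convexOn_sum_mul_comp_inner {φ : ℝ → ℝ} (hφ : ConvexOn ℝ univ φ) (hw : ∀ k, 0 ≤ w k) :
    ConvexOn ℝ univ (fun U : F => ∑ k, w k * φ ⟪c k, U⟫) := by
  have hterm (k : ι) : ConvexOn ℝ univ (fun U : F => w k * φ ⟪c k, U⟫) :=
    (hφ.comp_linearMap (innerₛₗ ℝ (c k))).smul (hw k)
  simpa only [Finset.sum_fn] using
    Finset.sum_induction _ (ConvexOn ℝ univ) (fun _ _ => ConvexOn.add)
      (convexOn_const 0 convex_univ) fun k _ => hterm k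

theorem hasGradientAt_sum_mul_comp_inner [CompleteSpace F] {φ φ' : ℝ → ℝ}
    (hφ : ∀ t, HasDerivAt φ (φ' t) t) (U : F) :
    HasGradientAt (fun V => ∑ k, w k * φ ⟪c k, V⟫) (∑ k, (w k * φ' ⟪c k, U⟫) • c k) U := by
  rw [hasGradientAt_iff_hasFDerivAt, map_sum]
  refine HasFDerivAt.fun_sum fun k _ => ?_
  have hk := ((hφ _).comp_hasFDerivAt U (innerSL ℝ (c k)).hasFDerivAt).const_mul (w k)
  refine hk.congr_fderiv ?_
  rw [smul_smul, map_smul]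
  rfl

theorem norm_sum_smul_sub_sum_smul_le {φ' : ℝ → ℝ} {K : NNReal} (hφ' : LipschitzWith K φ')
    (U V : F) :
    ‖∑ k, (w k * φ' ⟪c k, U⟫) • c k - ∑ k, (w k * φ' ⟪c k, V⟫) • c k‖ ≤
      K * (∑ k, |w k| * ‖c k‖ ^ 2) * ‖U - V‖ := by
  have hterm (k : ι) : ‖(w k * φ' ⟪c k, U⟫) • c k - (w k * φ' ⟪c k, V⟫) • c k‖ ≤
      K * (|w k| * ‖c k‖ ^ 2) * ‖U - V‖ := by
    have hφ'k : |φ' ⟪c k, U⟫ - φ' ⟪c k, V⟫| ≤ K * (‖c k‖ * ‖U - V‖) := by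
      calc _ ≤ K * |⟪c k, U⟫ - ⟪c k, V⟫| := by
            simpa only [Real.dist_eq] using hφ'.dist_le_mul ⟪c k, U⟫ ⟪c k, V⟫
        _ ≤ K * (‖c k‖ * ‖U - V‖) := by
            rw [← inner_sub_right]
            exact mul_le_mul_of_nonneg_left (abs_real_inner_le_norm _ _) K.2
    rw [← sub_smul, ← mul_sub, norm_smul, Real.norm_eq_abs, abs_mul]
    calc |w k| * |φ' ⟪c k, U⟫ - φ' ⟪c k, V⟫| * ‖c k‖
        ≤ |w k| * (K * (‖c k‖ * ‖U - V‖)) * ‖c k‖ := by gcongr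
      _ = K * (|w k| * ‖c k‖ ^ 2) * ‖U - V‖ := by ring
  rw [← Finset.sum_sub_distrib, Finset.mul_sum, Finset.sum_mul]
  exact (norm_sum_le _ _).trans (Finset.sum_le_sum fun k _ => hterm k)

end RidgeSum

section ScoreVector

open RealInnerProductSpace

variable {G C : Type*} [Fintype G] [Fintype C] [DecidableEq C]

noncomputable def scoreVec (x : EuclideanSpace ℝ G) (j : C) : EuclideanSpace ℝ (C ⊕ G × C) :=
  WithLp.toLp 2 (Sum.elim (Pi.single j 1) fun gj => if gj.2 = j then x gj.1 else 0)

theorem inner_scoreVec (x : EuclideanSpace ℝ G) (j : C) (U : EuclideanSpace ℝ (C ⊕ G × C)) :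
    ⟪scoreVec x j, U⟫ = U (Sum.inl j) + ∑ g, x g * U (Sum.inr (g, j)) := by
  simp [scoreVec, PiLp.inner_apply, Fintype.sum_sum_type, Fintype.sum_prod_type, Pi.single_apply,
    mul_comm]

theorem norm_scoreVec_sq (x : EuclideanSpace ℝ G) (j : C) :
    ‖scoreVec x j‖ ^ 2 = 1 + ‖x‖ ^ 2 := by
  simp [scoreVec, EuclideanSpace.norm_sq_eq, Fintype.sum_sum_type, Fintype.sum_prod_type,
    Pi.single_apply]

end ScoreVector

open RealInnerProductSpace in
theorem mhsvm_loss_convex_diff_lipschitz_grad_general (n p J : ℕ)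
    (δ : ℝ) (hδ : 0 < δ)
    (x : Fin n → EuclideanSpace ℝ (Fin p)) (y : Fin n → Fin J)
    (a : Fin n → Fin J → ℝ) (ha : ∀ i j, a i j = if y i = j then 0 else 1)
    (ℓM : EuclideanSpace ℝ (Fin J ⊕ Fin p × Fin J) → ℝ)
    (hℓM : ∀ U, ℓM U = (1 / (n : ℝ)) * ∑ i, ∑ j : Fin J,
      a i j * phiH δ (U (Sum.inl j) + ∑ g : Fin p, x i g * U (Sum.inr (g, j))))
    (Lm : ℝ) (hLm : Lm = ((J : ℝ) / ((n : ℝ) * δ)) * ∑ i, (1 + ‖x i‖ ^ 2)) :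
    ConvexOn ℝ Set.univ ℓM ∧
    ∃ grad : EuclideanSpace ℝ (Fin J ⊕ Fin p × Fin J) →
        EuclideanSpace ℝ (Fin J ⊕ Fin p × Fin J),
      (∀ U, HasGradientAt ℓM (grad U) U) ∧
      ∀ U V, ‖grad U - grad V‖ ≤ Lm * ‖U - V‖ := by
  set w : Fin n × Fin J → ℝ := fun k => a k.1 k.2 / n
  set c : Fin n × Fin J → EuclideanSpace ℝ (Fin J ⊕ Fin p × Fin J) :=
    fun k => scoreVec (x k.1) k.2
  have ha01 (i : Fin n) (j : Fin J) : 0 ≤ a i j ∧ a i j ≤ 1 := by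
    rw [ha]; split_ifs <;> norm_num
  have hw (k : Fin n × Fin J) : 0 ≤ w k := div_nonneg (ha01 k.1 k.2).1 n.cast_nonneg
  have hℓ : ℓM = fun U => ∑ k, w k * phiH δ ⟪c k, U⟫ := by
    funext U
    simp only [hℓM, w, c, inner_scoreVec, Fintype.sum_prod_type, Finset.mul_sum]
    ring_nf
  have hLipConst : ((Real.toNNReal δ)⁻¹ : NNReal) * ∑ k, |w k| * ‖c k‖ ^ 2 ≤ Lm := by
    rw [hLm, Fintype.sum_prod_type, NNReal.coe_inv, Real.coe_toNNReal _ hδ.le, Finset.mul_sum,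
      Finset.mul_sum]
    refine Finset.sum_le_sum fun i _ => ?_
    calc δ⁻¹ * ∑ j, |w (i, j)| * ‖c (i, j)‖ ^ 2 ≤ δ⁻¹ * ∑ _j : Fin J, 1 / n * (1 + ‖x i‖ ^ 2) := by
          gcongr with j
          · rw [abs_of_nonneg (hw _)]
            exact div_le_div_of_nonneg_right (ha01 i j).2 n.cast_nonneg
          · exact (norm_scoreVec_sq _ _).le
      _ = J / (n * δ) * (1 + ‖x i‖ ^ 2) := by
          simp only [Finset.sum_const, Finset.card_univ, Fintype.card_fin, nsmul_eq_mul]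
          field_simp
  subst hℓ
  exact ⟨convexOn_sum_mul_comp_inner w c (convexOn_phiH hδ) hw, _,
    hasGradientAt_sum_mul_comp_inner w c (hasDerivAt_phiH hδ),
    fun U V => (norm_sum_smul_sub_sum_smul_le w c (lipschitzWith_phiHDeriv hδ) U V).trans
      (by gcongr)⟩

/-- the multi-class huberized loss
`ℓ_M(b,W) = (1/n) ∑ᵢ ∑ⱼ aᵢⱼ φ_H(bⱼ + xᵢᵀ wⱼ)`, viewed as a function of
`U ∈ ℝ^{J} × ℝ^{p×J}` with the Euclidean (Frobenius) norm (here encoded as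
`EuclideanSpace ℝ (Fin J ⊕ Fin p × Fin J)`, with `b_j = U (inl j)` and
`W_{gj} = U (inr (g,j))`), is convex and differentiable with gradient
Lipschitz continuous with constant `L_m = (J/(nδ)) ∑ᵢ (1 + ‖xᵢ‖²)`. -/
theorem mhsvm_loss_convex_diff_lipschitz_grad (n p J : ℕ) (hn : 0 < n)
    (δ : ℝ) (hδ : 0 < δ)
    (x : Fin n → EuclideanSpace ℝ (Fin p)) (y : Fin n → Fin J)
    (a : Fin n → Fin J → ℝ) (ha : ∀ i j, a i j = if y i = j then 0 else 1)
    (ℓM : EuclideanSpace ℝ (Fin J ⊕ Fin p × Fin J) → ℝ)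
    (hℓM : ∀ U, ℓM U = (1 / (n : ℝ)) * ∑ i, ∑ j : Fin J,
      a i j * phiH δ (U (Sum.inl j) + ∑ g : Fin p, x i g * U (Sum.inr (g, j))))
    (Lm : ℝ) (hLm : Lm = ((J : ℝ) / ((n : ℝ) * δ)) * ∑ i, (1 + ‖x i‖ ^ 2)) :
    ConvexOn ℝ Set.univ ℓM ∧
    ∃ grad : EuclideanSpace ℝ (Fin J ⊕ Fin p × Fin J) →
        EuclideanSpace ℝ (Fin J ⊕ Fin p × Fin J),
      (∀ U, HasGradientAt ℓM (grad U) U) ∧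
      ∀ U V, ‖grad U - grad V‖ ≤ Lm * ‖U - V‖ :=
  mhsvm_loss_convex_diff_lipschitz_grad_general n p J δ hδ x y a ha ℓM hℓM Lm hLm
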